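/- arXiv:2107.00819 — 2 statements merged into one kernel-verified Lean document; each statement's English description precedes it below -/
import Mathlib

section
/- Let f: {0,1}^n → {0,1}, let D be a δ-balanced product distribution on {0,1}^n (each coordinate has expectation in [δ, 1-δ]), and let G be an (α,L)-impurity function. Set κ = max(2/(αδ(1-δ)), L/8). Then for every coordinate i, the G-purity gain of querying x_i on f under D is bounded between (1/κ)·(E[f_{x_i=0}] - E[f_{x_i=1}])^2 and κ·(E[f_{x_i=0}] - E[f_{x_i=1}])^2. -/
/-!
Since `D` is a product distribution, `E[f] = p a + (1 - p) b` with `p = p_i`, `a = E[f_{x_i=1}]`,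
`b = E[f_{x_i=0}]`, so the purity gain is the Jensen gap `G(p a + (1-p) b) - p G(a) - (1-p) G(b)`.
The bounds on `G''` make `G` `α`-strongly concave and `G + L x² / 2` convex, which traps this gap
between `α/2 · p(1-p)(a-b)²` and `L/2 · p(1-p)(a-b)²`; finally `δ(1-δ) ≤ p(1-p) ≤ 1/4`.
-/

open Finset

section ProductWeights

variable {ι β : Type*} [DecidableEq ι]

theorem update_funSplitAt_symm (i : ι) (b c : β) (y : {j // j ≠ i} → β) :
    Function.update ((Equiv.funSplitAt i β).symm (c, y)) i b
      = (Equiv.funSplitAt i β).symm (b, y) := by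
  funext j
  by_cases hj : j = i <;> simp [Equiv.funSplitAt_symm_apply, hj]

variable [Fintype ι] [Fintype β]

theorem sum_prod_eq_one (q : ι → β → ℝ) (hq : ∀ j, ∑ b, q j b = 1) :
    ∑ x : ι → β, ∏ j, q j (x j) = 1 := by
  rw [← Fintype.prod_sum, Finset.prod_eq_one fun j _ => hq j]

theorem sum_prod_mul_mem_Icc (q : ι → β → ℝ) (hq₀ : ∀ j b, 0 ≤ q j b)
    (hq : ∀ j, ∑ b, q j b = 1) {F : (ι → β) → ℝ} (hF : ∀ x, F x ∈ Set.Icc (0 : ℝ) 1) :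
    ∑ x : ι → β, (∏ j, q j (x j)) * F x ∈ Set.Icc (0 : ℝ) 1 :=
  (convex_Icc 0 1).sum_mem (fun x _ => prod_nonneg fun j _ => hq₀ j (x j))
    (sum_prod_eq_one q hq) fun x _ => hF x

theorem sum_prod_mul_eq_sum_funSplitAt (q : ι → β → ℝ) (i : ι) (H : (ι → β) → ℝ) :
    ∑ x : ι → β, (∏ j, q j (x j)) * H x
      = ∑ b, ∑ y : {j // j ≠ i} → β,
          q i b * (∏ j : {j // j ≠ i}, q j (y j)) * H ((Equiv.funSplitAt i β).symm (b, y)) := by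
  rw [← Fintype.sum_prod_type', ← (Equiv.funSplitAt i β).symm.sum_comp]
  refine Fintype.sum_congr _ _ fun ⟨b, y⟩ => ?_
  have hb : (Equiv.funSplitAt i β).symm (b, y) i = b := by simp [Equiv.funSplitAt_symm_apply]
  have hy : ∀ j : {j // j ≠ i}, (Equiv.funSplitAt i β).symm (b, y) j = y j := fun j => by
    simp [Equiv.funSplitAt_symm_apply, j.2]
  rw [Fintype.prod_eq_mul_prod_subtype_ne _ i]
  simp only [hb, hy]

theorem sum_prod_mul_eq_sum_mul_sum_update (q : ι → β → ℝ) (i : ι) (hq : ∑ b, q i b = 1)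
    (F : (ι → β) → ℝ) :
    ∑ x : ι → β, (∏ j, q j (x j)) * F x
      = ∑ b, q i b * ∑ x : ι → β, (∏ j, q j (x j)) * F (Function.update x i b) := by
  rw [sum_prod_mul_eq_sum_funSplitAt q i]
  refine Fintype.sum_congr _ _ fun b => ?_
  rw [sum_prod_mul_eq_sum_funSplitAt q i, Finset.sum_comm, Finset.mul_sum]
  simp_rw [update_funSplitAt_symm, ← Finset.sum_mul, hq, one_mul, mul_assoc]

end ProductWeights

section SecondDerivative

variable {s : Set ℝ} {f f' f'' : ℝ → ℝ} {m : ℝ}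

theorem strongConvexOn_of_hasDerivAt₂_ge (hs : Convex ℝ s)
    (hf : ∀ x ∈ s, HasDerivAt f (f' x) x) (hf' : ∀ x ∈ s, HasDerivAt f' (f'' x) x)
    (hm : ∀ x ∈ s, m ≤ f'' x) : StrongConvexOn s m f := by
  have hint : interior s ⊆ s := interior_subset
  rw [strongConvexOn_iff_convex]
  simp only [Real.norm_eq_abs, sq_abs]
  refine convexOn_of_hasDerivWithinAt2_nonneg (f' := fun x => f' x - m * x)
    (f'' := fun x => f'' x - m) hs ?_ (fun x hx => ?_) (fun x hx => ?_)
    (fun x hx => sub_nonneg.2 (hm x (hint hx)))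
  · have hcont : ContinuousOn f s := fun x hx => (hf x hx).continuousAt.continuousWithinAt
    exact hcont.sub (by fun_prop)
  · refine ((hf x (hint hx)).sub ((hasDerivAt_pow 2 x).const_mul (m / 2))).hasDerivWithinAt
      |>.congr_deriv ?_
    push_cast
    ring
  · exact ((hf' x (hint hx)).sub ((hasDerivAt_id x).const_mul m)).hasDerivWithinAt.congr_deriv
      (by simp)

theorem strongConcaveOn_of_hasDerivAt₂_le (hs : Convex ℝ s)
    (hf : ∀ x ∈ s, HasDerivAt f (f' x) x) (hf' : ∀ x ∈ s, HasDerivAt f' (f'' x) x)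
    (hm : ∀ x ∈ s, f'' x ≤ -m) : StrongConcaveOn s m f := by
  have := strongConvexOn_of_hasDerivAt₂_ge (f := -f) (f' := -f') (f'' := -f'') hs
    (fun x hx => (hf x hx).neg) (fun x hx => (hf' x hx).neg)
    (fun x hx => le_neg_of_le_neg (hm x hx))
  simpa [StrongConcaveOn] using this.neg

variable {a b t : ℝ}

theorem StrongConcaveOn.mul_sq_le_jensen_gap (hf : StrongConcaveOn s m f) (ha : a ∈ s)
    (hb : b ∈ s) (ht₀ : 0 ≤ t) (ht₁ : t ≤ 1) :
    m / 2 * (t * (1 - t)) * (b - a) ^ 2 ≤ f (t * a + (1 - t) * b) - t * f a - (1 - t) * f b := by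
  have := hf.2 ha hb ht₀ (sub_nonneg.2 ht₁) (add_sub_cancel t 1)
  simp only [smul_eq_mul, Real.norm_eq_abs, sq_abs] at this
  nlinarith

theorem StrongConvexOn.jensen_gap_le_mul_sq (hf : StrongConvexOn s m f) (ha : a ∈ s)
    (hb : b ∈ s) (ht₀ : 0 ≤ t) (ht₁ : t ≤ 1) :
    f (t * a + (1 - t) * b) - t * f a - (1 - t) * f b ≤ -m / 2 * (t * (1 - t)) * (b - a) ^ 2 := by
  have := hf.2 ha hb ht₀ (sub_nonneg.2 ht₁) (add_sub_cancel t 1)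
  simp only [smul_eq_mul, Real.norm_eq_abs, sq_abs] at this
  nlinarith

theorem jensen_gap_mem_of_hasDerivAt₂ {α L : ℝ} (hs : Convex ℝ s)
    (hf : ∀ x ∈ s, HasDerivAt f (f' x) x) (hf' : ∀ x ∈ s, HasDerivAt f' (f'' x) x)
    (hbound : ∀ x ∈ s, -L ≤ f'' x ∧ f'' x ≤ -α) (ha : a ∈ s) (hb : b ∈ s) (ht₀ : 0 ≤ t)
    (ht₁ : t ≤ 1) :
    α / 2 * (t * (1 - t)) * (b - a) ^ 2 ≤ f (t * a + (1 - t) * b) - t * f a - (1 - t) * f b ∧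
      f (t * a + (1 - t) * b) - t * f a - (1 - t) * f b ≤ L / 2 * (t * (1 - t)) * (b - a) ^ 2 := by
  refine ⟨(strongConcaveOn_of_hasDerivAt₂_le hs hf hf' fun x hx => (hbound x hx).2
    ).mul_sq_le_jensen_gap ha hb ht₀ ht₁, ?_⟩
  simpa using (strongConvexOn_of_hasDerivAt₂_ge hs hf hf' fun x hx => (hbound x hx).1
    ).jensen_gap_le_mul_sq ha hb ht₀ ht₁

end SecondDerivative

noncomputable def purityGainConstant (α δ L : ℝ) : ℝ := max (2 / (α * δ * (1 - δ))) (L / 8)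

section PurityGainConstant

variable {α δ L t : ℝ}

theorem one_div_purityGainConstant_le (hα : 0 < α) (hδ : 0 < δ) (ht : δ ≤ t ∧ t ≤ 1 - δ) :
    1 / purityGainConstant α δ L ≤ α / 2 * (t * (1 - t)) := by
  have hδ₁ : 0 < 1 - δ := by linarith
  calc 1 / purityGainConstant α δ L ≤ 1 / (2 / (α * δ * (1 - δ))) :=
        one_div_le_one_div_of_le (by positivity) (le_max_left _ _)
    _ = α / 2 * (δ * (1 - δ)) := by rw [one_div_div]; ring
    _ ≤ α / 2 * (t * (1 - t)) :=
        mul_le_mul_of_nonneg_left (by nlinarith) (by positivity)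

theorem le_purityGainConstant (hL : 0 ≤ L) : L / 2 * (t * (1 - t)) ≤ purityGainConstant α δ L :=
  calc L / 2 * (t * (1 - t)) ≤ L / 8 := by nlinarith [sq_nonneg (t - 1 / 2)]
    _ ≤ purityGainConstant α δ L := le_max_right _ _

end PurityGainConstant

/-- Lemma 1 of the paper: for `f : {0,1}^n → {0,1}`, a `δ`-balanced product distribution `D`
(with biases `p i ∈ [δ, 1-δ]`), and an `(α,L)`-impurity function `G`, the `G`-purity gain of
querying `x_i` is within a factor `κ = max(2/(αδ(1-δ)), L/8)` of
`(E[f_{x_i=0}] - E[f_{x_i=1}])²`. Expectations are the finite sums weighted by the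
product weights `∏ j, if x j then p j else 1 - p j`. -/
theorem purity_gain_vs_diff (n : ℕ) (δ α L : ℝ) (f : (Fin n → Bool) → Bool)
    (p : Fin n → ℝ) (G G' G'' : ℝ → ℝ)
    (hδ : 0 < δ ∧ δ ≤ 1 / 2) (hαL : 0 < α ∧ α ≤ L)
    (hp : ∀ j, δ ≤ p j ∧ p j ≤ 1 - δ)
    (hG' : ∀ x ∈ Set.Icc (0 : ℝ) 1, HasDerivAt G (G' x) x)
    (hG'' : ∀ x ∈ Set.Icc (0 : ℝ) 1, HasDerivAt G' (G'' x) x)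
    (hbound : ∀ x ∈ Set.Icc (0 : ℝ) 1, -L ≤ G'' x ∧ G'' x ≤ -α)
    (i : Fin n) :
    let weight : (Fin n → Bool) → ℝ := fun x => ∏ j, if x j then p j else 1 - p j
    let E : ((Fin n → Bool) → Bool) → ℝ :=
      fun g => ∑ x : Fin n → Bool, weight x * (if g x then 1 else 0)
    let gain : ℝ :=
      G (E f) - p i * G (E (fun x => f (Function.update x i true)))
        - (1 - p i) * G (E (fun x => f (Function.update x i false)))
    let d : ℝ :=
      E (fun x => f (Function.update x i false)) - E (fun x => f (Function.update x i true))
    let κ : ℝ := max (2 / (α * δ * (1 - δ))) (L / 8)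
    (1 / κ) * d ^ 2 ≤ gain ∧ gain ≤ κ * d ^ 2 := by
  intro weight E gain d κ
  set q : Fin n → Bool → ℝ := fun j b => if b then p j else 1 - p j
  have hq : ∀ j, ∑ b, q j b = 1 := fun j => by simp [q]
  have hq₀ : ∀ j b, 0 ≤ q j b := fun j b => by dsimp only [q]; split <;> linarith [hp j]
  have hE : ∀ g, E g ∈ Set.Icc (0 : ℝ) 1 := fun g =>
    sum_prod_mul_mem_Icc q hq₀ hq fun x => by split <;> simp
  have hsplit : E f = p i * E (fun x => f (Function.update x i true))
      + (1 - p i) * E (fun x => f (Function.update x i false)) := by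
    have := sum_prod_mul_eq_sum_mul_sum_update q i (hq i) (fun x => if f x then 1 else 0)
    rwa [Fintype.sum_bool] at this
  obtain ⟨hlower, hupper⟩ := jensen_gap_mem_of_hasDerivAt₂ (convex_Icc 0 1) hG' hG'' hbound
    (hE fun x => f (Function.update x i true)) (hE fun x => f (Function.update x i false))
    (hδ.1.le.trans (hp i).1) (by linarith [hp i])
  rw [← hsplit] at hlower hupper
  constructor
  · calc 1 / κ * d ^ 2 ≤ α / 2 * (p i * (1 - p i)) * d ^ 2 := by
          gcongr; exact one_div_purityGainConstant_le hαL.1 hδ.1 (hp i)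
      _ ≤ gain := hlower
  · calc gain ≤ L / 2 * (p i * (1 - p i)) * d ^ 2 := hupper
      _ ≤ κ * d ^ 2 := by gcongr; exact le_purityGainConstant (by linarith)
end

section
/- Suppose S_1, ..., S_k ⊆ [m] are sets such that every nonempty collection has symmetric difference of size at least d ≥ (ln 5 / δ)·k, and x_1,...,x_m are independent Bernoulli with E[x_j] ∈ [δ,1-δ]. Define z_i(x) = ⊕_{j∈S_i} x_j. Then for every a ∈ {0,1}^k, |Pr[z(x) = a] - 2^{-k}| ≤ 5^{-k}. -/
/-!
Fourier expansion on `{0,1}^k`: writing `χ_I(z) = ∏_{i ∈ I} (-1)^{z_i}`, the indicator of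
`z = a` is `2^{-k} ∑_I χ_I(a) χ_I(z)`, so `|Pr[z = a] - 2^{-k}|` is at most the largest bias
`|E χ_I(z)|` over nonempty `I`. For the parity address, `χ_I(z(x)) = ∏_{j ∈ △_{i∈I} S_i} (-1)^{x_j}`,
and independence of the bits gives `|E χ_I(z(x))| = ∏_{j ∈ △ S_i} |1 - 2 p_j| ≤ (1 - 2δ)^d`,
which is at most `exp(-2δd) ≤ 5^{-k}`.
-/

open Finset

def boolSign (b : Bool) : ℝ := if b then -1 else 1

lemma abs_boolSign (b : Bool) : |boolSign b| = 1 := by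
  cases b <;> norm_num [boolSign]

lemma boolSign_decide_odd (n : ℕ) : boolSign (decide (Odd n)) = (-1) ^ n := by
  rcases Nat.even_or_odd n with h | h
  · simp [boolSign, h.neg_one_pow, Nat.not_odd_iff_even.mpr h]
  · simp [boolSign, h.neg_one_pow, h]

lemma boolSign_pow (b : Bool) (n : ℕ) : boolSign b ^ n = if Odd n then boolSign b else 1 := by
  rcases Nat.even_or_odd n with h | h <;> cases b <;>
    simp [boolSign, h, h.neg_one_pow, Nat.not_odd_iff_even.mpr]

lemma prod_boolSign {ι : Type*} (s : Finset ι) (x : ι → Bool) :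
    ∏ j ∈ s, boolSign (x j) = (-1) ^ #{j ∈ s | x j = true} := by
  simp only [boolSign, prod_ite, prod_const, one_pow, mul_one]

lemma indicator_eq_sum_prod_boolSign {ι : Type*} [Fintype ι] (z a : ι → Bool) :
    (if ∀ i, z i = a i then (1 : ℝ) else 0)
      = (1 / 2) ^ Fintype.card ι * ∑ I : Finset ι, ∏ i ∈ I, boolSign (a i) * boolSign (z i) := by
  have hfactor : ∀ i, (if z i = a i then (1 : ℝ) else 0)
      = 1 / 2 * (1 + boolSign (a i) * boolSign (z i)) := by
    intro i
    cases z i <;> cases a i <;> norm_num [boolSign]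
  rw [← powerset_univ, ← prod_one_add, ← card_univ, ← prod_const, ← prod_mul_distrib,
    ← prod_congr rfl fun i _ => hfactor i, prod_boole]
  simp only [mem_univ, true_implies]

theorem abs_sum_mul_indicator_sub_le {Ω ι : Type*} [Fintype Ω] [Fintype ι] (W : Ω → ℝ)
    (hW : ∑ ω, W ω = 1) (z : Ω → ι → Bool) (a : ι → Bool) {ε : ℝ} (hε : 0 ≤ ε)
    (hbias : ∀ I : Finset ι, I.Nonempty → |∑ ω, W ω * ∏ i ∈ I, boolSign (z ω i)| ≤ ε) :
    |∑ ω, W ω * (if ∀ i, z ω i = a i then 1 else 0) - (1 / 2) ^ Fintype.card ι| ≤ ε := by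
  classical
  set bias : Finset ι → ℝ := fun I => ∑ ω, W ω * ∏ i ∈ I, boolSign (z ω i)
  have hexpand : ∑ ω, W ω * (if ∀ i, z ω i = a i then 1 else 0)
      = (1 / 2) ^ Fintype.card ι * ∑ I, (∏ i ∈ I, boolSign (a i)) * bias I := by
    simp only [indicator_eq_sum_prod_boolSign, bias, mul_sum, prod_mul_distrib]
    rw [sum_comm]
    refine sum_congr rfl fun I _ => sum_congr rfl fun ω _ => by ring
  have hempty : bias ∅ = 1 := by simpa [bias] using hW
  rw [hexpand, ← add_sum_erase _ _ (mem_univ ∅), hempty, prod_empty, one_mul, mul_add, mul_one,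
    add_sub_cancel_left, abs_mul, abs_of_nonneg (by positivity)]
  calc (1 / 2) ^ Fintype.card ι * |∑ I ∈ univ.erase ∅, (∏ i ∈ I, boolSign (a i)) * bias I|
      ≤ (1 / 2) ^ Fintype.card ι * ∑ I ∈ univ.erase ∅, ε := by
        gcongr
        refine (abs_sum_le_sum_abs _ _).trans (sum_le_sum fun I hI => ?_)
        rw [abs_mul, abs_prod]
        simp only [abs_boolSign, prod_const_one, one_mul]
        exact hbias I (nonempty_iff_ne_empty.mpr (ne_of_mem_erase hI))
    _ ≤ (1 / 2) ^ Fintype.card ι * (2 ^ Fintype.card ι * ε) := by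
        rw [sum_const, nsmul_eq_mul]
        gcongr
        exact_mod_cast (card_erase_le).trans (by simp)
    _ = ε := by
        rw [← mul_assoc, ← mul_pow]
        norm_num

section Parity

variable {ι κ : Type*} [Fintype ι] [DecidableEq ι]

-- The symmetric difference `△_{i ∈ I} S i`: the points lying in an odd number of the sets.
def symmDiffOver (S : κ → Finset ι) (I : Finset κ) : Finset ι :=
  {j | Odd #{i ∈ I | j ∈ S i}}

lemma prod_prod_eq_prod_pow_card {M : Type*} [CommMonoid M] (S : κ → Finset ι) (I : Finset κ)
    (f : ι → M) :
    ∏ i ∈ I, ∏ j ∈ S i, f j = ∏ j, f j ^ #{i ∈ I | j ∈ S i} := by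
  rw [prod_comm' (t' := univ) (s' := fun j => {i ∈ I | j ∈ S i}) (by simp)]
  simp only [prod_const]

lemma prod_boolSign_parity (S : κ → Finset ι) (I : Finset κ) (x : ι → Bool) :
    ∏ i ∈ I, boolSign (decide (Odd #{j ∈ S i | x j = true}))
      = ∏ j ∈ symmDiffOver S I, boolSign (x j) := by
  simp only [boolSign_decide_odd, ← prod_boolSign, prod_prod_eq_prod_pow_card, boolSign_pow,
    symmDiffOver, prod_filter]

end Parity

section Bernoulli

variable {ι : Type*} [Fintype ι]

def bernoulliWeight (p : ι → ℝ) (x : ι → Bool) : ℝ :=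
  ∏ j, if x j then p j else 1 - p j

lemma sum_bernoulliWeight_mul_prod_boolSign [DecidableEq ι] (p : ι → ℝ) (T : Finset ι) :
    ∑ x, bernoulliWeight p x * ∏ j ∈ T, boolSign (x j) = ∏ j ∈ T, (1 - 2 * p j) := by
  calc ∑ x, bernoulliWeight p x * ∏ j ∈ T, boolSign (x j)
      = ∑ x : ι → Bool, ∏ j, (if x j then p j else 1 - p j) *
          (if j ∈ T then boolSign (x j) else 1) := by
        refine sum_congr rfl fun x _ => ?_
        rw [bernoulliWeight, ← prod_ite_mem_eq T, ← prod_mul_distrib]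
    _ = ∏ j, ∑ b : Bool, (if b then p j else 1 - p j) * (if j ∈ T then boolSign b else 1) :=
        (Fintype.prod_sum fun j (b : Bool) =>
          (if b then p j else 1 - p j) * (if j ∈ T then boolSign b else 1)).symm
    _ = ∏ j, if j ∈ T then 1 - 2 * p j else 1 := by
        refine prod_congr rfl fun j _ => ?_
        by_cases hj : j ∈ T
        · simp only [hj, if_true, Fintype.sum_bool, boolSign, Bool.false_eq_true, if_false]
          ring
        · simp [hj]
    _ = ∏ j ∈ T, (1 - 2 * p j) := prod_ite_mem_eq _ _

lemma sum_bernoulliWeight [DecidableEq ι] (p : ι → ℝ) : ∑ x, bernoulliWeight p x = 1 := by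
  simpa using sum_bernoulliWeight_mul_prod_boolSign p ∅

lemma abs_sum_bernoulliWeight_mul_prod_boolSign_le [DecidableEq ι] {p : ι → ℝ} {δ : ℝ}
    (hp : ∀ j, δ ≤ p j ∧ p j ≤ 1 - δ) (T : Finset ι) :
    |∑ x, bernoulliWeight p x * ∏ j ∈ T, boolSign (x j)| ≤ (1 - 2 * δ) ^ #T := by
  rw [sum_bernoulliWeight_mul_prod_boolSign, abs_prod, ← prod_const]
  exact prod_le_prod (fun _ _ => abs_nonneg _) fun j _ =>
    abs_le.mpr ⟨by linarith [hp j], by linarith [hp j]⟩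

end Bernoulli

lemma one_sub_two_mul_pow_le_one_div_five_pow {δ : ℝ} {k d : ℕ} (hδ₀ : 0 < δ)
    (hδ₁ : δ ≤ 1 / 2) (hd : Real.log 5 / δ * k ≤ d) : (1 - 2 * δ) ^ d ≤ (1 / 5 : ℝ) ^ k := by
  have hδd : Real.log 5 * k ≤ δ * d := by
    rw [div_mul_eq_mul_div, div_le_iff₀ hδ₀] at hd
    linarith
  calc (1 - 2 * δ) ^ d ≤ Real.exp (-(2 * δ)) ^ d :=
        pow_le_pow_left₀ (by linarith) (Real.one_sub_le_exp_neg _) d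
    _ = Real.exp (-(2 * δ * d)) := by rw [← Real.exp_nat_mul]; ring_nf
    _ ≤ Real.exp (-(k * Real.log 5)) := Real.exp_le_exp.mpr (by nlinarith)
    _ = (1 / 5) ^ k := by
        rw [Real.exp_neg, Real.exp_nat_mul, Real.exp_log (by norm_num), one_div, inv_pow]

/-- Lemma 4 of the paper: if the sets `S_1, ..., S_k ⊆ [m]` have every nonempty symmetric
difference of size at least `d ≥ (ln 5/δ)·k`, and `x_1, ..., x_m` are independent bits with
biases `p j ∈ [δ, 1-δ]`, then the address `z(x)` with `z_i(x) = ⊕_{j ∈ S_i} x_j` is almost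
uniform: `|Pr[z(x) = a] - 2^{-k}| ≤ 5^{-k}` for every `a ∈ {0,1}^k`. -/
theorem address_almost_uniform (m k d : ℕ) (δ : ℝ) (p : Fin m → ℝ)
    (S : Fin k → Finset (Fin m))
    (hδ : 0 < δ ∧ δ ≤ 1 / 2)
    (hd : Real.log 5 / δ * k ≤ (d : ℝ))
    (hp : ∀ j, δ ≤ p j ∧ p j ≤ 1 - δ)
    (hS : ∀ I : Finset (Fin k), I.Nonempty →
      d ≤ (Finset.univ.filter
            (fun j => Odd (I.filter (fun i => j ∈ S i)).card)).card)
    (a : Fin k → Bool) :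
    |(∑ x : Fin m → Bool,
        (∏ j, if x j then p j else 1 - p j) *
          (if (∀ i, (Odd ((S i).filter (fun j => x j = true)).card ↔ a i = true))
            then (1 : ℝ) else 0)) - (1 / 2) ^ k|
      ≤ (1 / 5 : ℝ) ^ k := by
  obtain ⟨hδ₀, hδ₁⟩ := hδ
  have hdecay : 0 ≤ 1 - 2 * δ := by linarith
  have hbias : ∀ I : Finset (Fin k), I.Nonempty →
      |∑ x, bernoulliWeight p x * ∏ i ∈ I, boolSign (decide (Odd #{j ∈ S i | x j = true}))|
        ≤ (1 - 2 * δ) ^ d := fun I hI => by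
    simp only [prod_boolSign_parity]
    exact (abs_sum_bernoulliWeight_mul_prod_boolSign_le hp _).trans
      (pow_le_pow_of_le_one hdecay (by linarith) (hS I hI))
  have hdeviation := abs_sum_mul_indicator_sub_le (bernoulliWeight p) (sum_bernoulliWeight p)
    (fun x i => decide (Odd #{j ∈ S i | x j = true})) a (pow_nonneg hdecay d) hbias
  have hevent : ∀ x : Fin m → Bool, (∀ i, decide (Odd #{j ∈ S i | x j = true}) = a i) ↔
      ∀ i, (Odd #{j ∈ S i | x j = true} ↔ a i = true) :=
    fun x => forall_congr' fun i => by rw [Bool.eq_iff_iff, decide_eq_true_iff]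
  simp only [Fintype.card_fin, hevent] at hdeviation
  exact hdeviation.trans (one_sub_two_mul_pow_le_one_div_five_pow hδ₀ hδ₁ hd)
end
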